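/- Let X be a metric space. The straight-line map H : I_p c([0,1]) → c([0,1]) given, for a coarse map g(x,t) = (ρ(x), tρ(x)/x) with ρ monotone, ρ(x) ≤ x, and x - ρ(x) → ∞ controlled, by H((x,t), s) = (x - s, t(x-s)/x) for 0 ≤ s ≤ x - ρ(x) (with p(x,t) = x - ρ(x) - 1), is a coarse homotopy from the identity of c([0,1]) to g, i.e., H is a coarse map with H((x,t),0) = (x,t) and H((x,t), x - ρ(x)) = g(x,t). -/

import Mathlib

open Metric Bornology Set

noncomputable section

/-- The metric cone over `[0,1]`: `c([0,1]) = {(x,t) : 0 ≤ t ≤ x} ⊆ ℝ²` with the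
Euclidean metric. -/
def c01 : Set (EuclideanSpace ℝ (Fin 2)) := {v | 0 ≤ v 1 ∧ v 1 ≤ v 0}

/-- A map between metric spaces is bornologous if it admits a control function. -/
def Bornologous {X Y : Type*} [PseudoMetricSpace X] [PseudoMetricSpace Y]
    (f : X → Y) : Prop :=
  ∃ ρ : ℝ → ℝ, ∀ x x', dist (f x) (f x') ≤ ρ (dist x x')

/-- A map is coarse if it is bornologous and preimages of bounded sets are bounded. -/
def CoarseMap {X Y : Type*} [PseudoMetricSpace X] [PseudoMetricSpace Y]
    (f : X → Y) : Prop :=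
  Bornologous f ∧ ∀ B : Set Y, Bornology.IsBounded B → Bornology.IsBounded (f ⁻¹' B)

/-- The `p`-cylinder `I_p X = {(x,s) ∈ X × [0,∞) : s ≤ p(x)+1}` with the `ℓ²` product
metric. -/
def Cyl {X : Type*} [MetricSpace X] (p : X → ℝ) : Type _ :=
  {q : WithLp 2 (X × ℝ) // 0 ≤ q.ofLp.2 ∧ q.ofLp.2 ≤ p q.ofLp.1 + 1}

instance {X : Type*} [MetricSpace X] (p : X → ℝ) : MetricSpace (Cyl p) := by
  unfold Cyl; infer_instance

/-! The straight-line map slides `(x,t)` towards the apex along its ray, reaching the point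
`g(x,t)` of radius `ρ(x)` at time `x - ρ(x)`. It is Lipschitz on the cylinder: the only
nonlinear coordinate `t(x-s)/x` changes by at most `|Δt| + |Δ(x-s)| + |Δx|` on the region
`0 ≤ t ≤ x`, `0 ≤ x - s ≤ x`. It is proper because on the cylinder its first coordinate `x - s`
is at least `ρ(x)`, and a monotone unbounded `ρ` has bounded sublevel sets; this bounds `x`, and
with it `t` and `s`. -/

open scoped ENNReal

local notation "ℝ²" => EuclideanSpace ℝ (Fin 2)

theorem WithLp.prod_dist_le_add {α β : Type*} [PseudoMetricSpace α] [PseudoMetricSpace β]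
    {p : ℝ≥0∞} (hp : 1 ≤ p.toReal) (x y : WithLp p (α × β)) :
    dist x y ≤ dist x.fst y.fst + dist x.snd y.snd := by
  rw [WithLp.prod_dist_eq_add (by linarith)]
  exact Real.rpow_add_rpow_le_add dist_nonneg dist_nonneg hp

theorem EuclideanSpace.dist_le_abs_sub_add_abs_sub (u w : ℝ²) :
    dist u w ≤ |u 0 - w 0| + |u 1 - w 1| := by
  rw [EuclideanSpace.dist_eq, Fin.sum_univ_two, Real.sqrt_le_left (by positivity)]
  simp only [Real.dist_eq, sq_abs]
  nlinarith [abs_nonneg (u 0 - w 0), abs_nonneg (u 1 - w 1), sq_abs (u 0 - w 0),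
    sq_abs (u 1 - w 1)]

theorem abs_mul_div_sub_mul_div_le {x t a x' t' a' : ℝ} (ht : 0 ≤ t) (htx : t ≤ x)
    (ht' : 0 ≤ t') (htx' : t' ≤ x') (ha' : 0 ≤ a') (hax' : a' ≤ x') :
    |t * a / x - t' * a' / x'| ≤ |t - t'| + |a - a'| + |x - x'| := by
  have hx := ht.trans htx
  have hx' := ht'.trans htx'
  have hu : |t / x| ≤ 1 := by
    rw [abs_of_nonneg (div_nonneg ht hx)]; exact div_le_one_of_le₀ htx hx
  have hv : |a' / x'| ≤ 1 := by
    rw [abs_of_nonneg (div_nonneg ha' hx')]; exact div_le_one_of_le₀ hax' hx'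
  -- Also valid when `x = 0` or `x' = 0`: then `t = 0`, resp. `t' = a' = 0`, and `y / 0 = 0`.
  have key : t * a / x - t' * a' / x' =
      (t - t') * (a' / x') + (a - a') * (t / x) + (x' - x) * (t / x * (a' / x')) := by
    rcases hx.eq_or_lt with rfl | hx
    · obtain rfl : t = 0 := le_antisymm htx ht
      simp [mul_div_assoc]
    rcases hx'.eq_or_lt with rfl | hx'
    · obtain rfl : t' = 0 := le_antisymm htx' ht'
      obtain rfl : a' = 0 := le_antisymm hax' ha'
      simp only [zero_div, mul_zero, sub_zero, add_zero, zero_sub]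
      ring
    field_simp
    ring
  have shrink : ∀ y c : ℝ, |c| ≤ 1 → |y * c| ≤ |y| := fun y c hc => by
    rw [abs_mul]; exact mul_le_of_le_one_right (abs_nonneg y) hc
  calc |t * a / x - t' * a' / x'|
      ≤ |(t - t') * (a' / x')| + |(a - a') * (t / x)| + |(x' - x) * (t / x * (a' / x'))| := by
        rw [key]; exact abs_add_three _ _ _
    _ ≤ |t - t'| + |a - a'| + |x' - x| := by
        refine add_le_add_three (shrink _ _ hv) (shrink _ _ hu) (shrink _ _ ?_)
        rw [abs_mul]; exact mul_le_one₀ hu (abs_nonneg _) hv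
    _ = |t - t'| + |a - a'| + |x - x'| := by rw [abs_sub_comm x']

def straightLine (x t s : ℝ) : ℝ² := !₂[x - s, t * (x - s) / x]

@[simp] lemma straightLine_zero (x t s : ℝ) : straightLine x t s 0 = x - s := rfl

@[simp] lemma straightLine_one (x t s : ℝ) : straightLine x t s 1 = t * (x - s) / x := rfl

lemma straightLine_mem_c01 {x t s : ℝ} (ht : 0 ≤ t) (htx : t ≤ x) (hsx : s ≤ x) :
    straightLine x t s ∈ c01 := by
  have hx := ht.trans htx
  refine ⟨by simpa using div_nonneg (mul_nonneg ht (sub_nonneg.2 hsx)) hx, ?_⟩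
  simp only [straightLine_zero, straightLine_one]
  rw [mul_div_right_comm]
  exact mul_le_of_le_one_left (sub_nonneg.2 hsx) (div_le_one_of_le₀ htx hx)

lemma straightLine_of_s_eq_zero {v : ℝ²} (hv : v ∈ c01) : straightLine (v 0) (v 1) 0 = v := by
  ext i
  fin_cases i
  · simp
  · rcases eq_or_ne (v 0) 0 with h | h
    · simp [h, le_antisymm (hv.2.trans_eq h) hv.1]
    · simp [mul_div_cancel_right₀ _ h]

lemma dist_straightLine_le {x t s x' t' s' : ℝ} (ht : 0 ≤ t) (htx : t ≤ x)
    (ht' : 0 ≤ t') (htx' : t' ≤ x') (hs' : 0 ≤ s') (hsx' : s' ≤ x') :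
    dist (straightLine x t s) (straightLine x' t' s') ≤
      |t - t'| + 3 * |x - x'| + 2 * |s - s'| := by
  have hsub : |x - s - (x' - s')| ≤ |x - x'| + |s - s'| := by
    rw [sub_sub_sub_comm]; exact abs_sub _ _
  have hsecond := abs_mul_div_sub_mul_div_le (a := x - s) ht htx ht' htx'
    (sub_nonneg.2 hsx') (sub_le_self _ hs')
  refine (EuclideanSpace.dist_le_abs_sub_add_abs_sub _ _).trans ?_
  simp only [straightLine_zero, straightLine_one]
  linarith

namespace Cyl

variable {p : c01 → ℝ}

-- The paper's coordinates of `z = ((x, t), s) ∈ I_p c([0,1])`.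
def x (z : Cyl p) : ℝ := (z.val.ofLp.1 : ℝ²) 0

def t (z : Cyl p) : ℝ := (z.val.ofLp.1 : ℝ²) 1

def s (z : Cyl p) : ℝ := z.val.ofLp.2

lemma t_nonneg (z : Cyl p) : 0 ≤ z.t := z.val.ofLp.1.2.1

lemma t_le_x (z : Cyl p) : z.t ≤ z.x := z.val.ofLp.1.2.2

lemma s_nonneg (z : Cyl p) : 0 ≤ z.s := z.2.1

lemma x_nonneg (z : Cyl p) : 0 ≤ z.x := z.t_nonneg.trans z.t_le_x

lemma s_le (z : Cyl p) : z.s ≤ p z.val.ofLp.1 + 1 := z.2.2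

lemma s_le_x (hp : ∀ q : c01, p q + 1 ≤ (q : ℝ²) 0) (z : Cyl p) : z.s ≤ z.x :=
  z.s_le.trans (hp _)

lemma dist_base_le_dist (z z' : Cyl p) :
    dist (z.val.ofLp.1 : ℝ²) (z'.val.ofLp.1 : ℝ²) ≤ dist z z' :=
  WithLp.dist_fst_le z.val z'.val

lemma abs_sub_x_le_dist (z z' : Cyl p) : |z.x - z'.x| ≤ dist z z' :=
  (PiLp.dist_apply_le _ _ 0).trans (dist_base_le_dist z z')

lemma abs_sub_t_le_dist (z z' : Cyl p) : |z.t - z'.t| ≤ dist z z' :=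
  (PiLp.dist_apply_le _ _ 1).trans (dist_base_le_dist z z')

lemma abs_sub_s_le_dist (z z' : Cyl p) : |z.s - z'.s| ≤ dist z z' :=
  WithLp.dist_snd_le z.val z'.val

lemma dist_le_abs_sub_add (z z' : Cyl p) :
    dist z z' ≤ |z.x - z'.x| + |z.t - z'.t| + |z.s - z'.s| :=
  calc dist z z' ≤ dist (z.val.ofLp.1 : ℝ²) (z'.val.ofLp.1 : ℝ²) + |z.s - z'.s| :=
        WithLp.prod_dist_le_add (by norm_num) z.val z'.val
    _ ≤ |z.x - z'.x| + |z.t - z'.t| + |z.s - z'.s| := by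
        gcongr; exact EuclideanSpace.dist_le_abs_sub_add_abs_sub _ _

lemma isBounded_setOf_x_le (hp : ∀ q : c01, p q + 1 ≤ (q : ℝ²) 0) (X : ℝ) :
    IsBounded {z : Cyl p | z.x ≤ X} := by
  refine isBounded_iff.2 ⟨3 * X, fun z hz z' hz' => (z.dist_le_abs_sub_add z').trans ?_⟩
  have bound : ∀ a b : ℝ, 0 ≤ a → a ≤ X → 0 ≤ b → b ≤ X → |a - b| ≤ X :=
    fun a b => abs_sub_le_of_nonneg_of_le
  have := bound _ _ z.x_nonneg hz z'.x_nonneg hz'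
  have := bound _ _ z.t_nonneg (z.t_le_x.trans hz) z'.t_nonneg (z'.t_le_x.trans hz')
  have := bound _ _ z.s_nonneg ((z.s_le_x hp).trans hz) z'.s_nonneg ((z'.s_le_x hp).trans hz')
  linarith

end Cyl

theorem Monotone.bddAbove_preimage_Iic {α β : Type*} [LinearOrder α] [LinearOrder β]
    {f : α → β} (hf : Monotone f) (hunbdd : ¬BddAbove (range f)) (b : β) :
    BddAbove (f ⁻¹' Iic b) := by
  obtain ⟨_, ⟨a, rfl⟩, hba⟩ := not_bddAbove_iff.1 hunbdd b
  exact ⟨a, fun a' ha' => (hf.reflect_lt (lt_of_le_of_lt ha' hba)).le⟩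

section StraightLineHomotopy

variable {p : c01 → ℝ} (hp : ∀ q : c01, p q + 1 ≤ (q : ℝ²) 0)

def straightLineHomotopy (z : Cyl p) : c01 :=
  ⟨straightLine z.x z.t z.s, straightLine_mem_c01 z.t_nonneg z.t_le_x (z.s_le_x hp)⟩

@[simp] lemma coe_straightLineHomotopy (z : Cyl p) :
    (straightLineHomotopy hp z : ℝ²) = straightLine z.x z.t z.s := rfl

lemma straightLineHomotopy_of_s_eq_zero {z : Cyl p} (hz : z.s = 0) :
    straightLineHomotopy hp z = z.val.ofLp.1 :=
  Subtype.ext <| by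
    rw [coe_straightLineHomotopy, hz]
    exact straightLine_of_s_eq_zero z.val.ofLp.1.2

lemma dist_straightLineHomotopy_le (z z' : Cyl p) :
    dist (straightLineHomotopy hp z) (straightLineHomotopy hp z') ≤ 6 * dist z z' := by
  have h := dist_straightLine_le (s := z.s) z.t_nonneg z.t_le_x z'.t_nonneg z'.t_le_x z'.s_nonneg
    (z'.s_le_x hp)
  have := z.abs_sub_x_le_dist z'
  have := z.abs_sub_t_le_dist z'
  have := z.abs_sub_s_le_dist z'
  exact h.trans (by linarith)

lemma bornologous_straightLineHomotopy : Bornologous (straightLineHomotopy hp) :=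
  ⟨fun d => 6 * d, dist_straightLineHomotopy_le hp⟩

lemma isBounded_preimage_straightLineHomotopy
    (hend : ∀ R, ∃ X, ∀ q : c01, (q : ℝ²) 0 - (p q + 1) ≤ R → (q : ℝ²) 0 ≤ X)
    {B : Set c01} (hB : IsBounded B) : IsBounded (straightLineHomotopy hp ⁻¹' B) := by
  obtain ⟨R, hR⟩ := hB.subset_closedBall (⟨0, by simp [c01]⟩ : c01)
  obtain ⟨X, hX⟩ := hend R
  refine (Cyl.isBounded_setOf_x_le hp X).subset fun z hz => hX _ ?_
  have hdist : |z.x - z.s| ≤ R := by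
    simpa [Subtype.dist_eq] using (PiLp.dist_apply_le _ _ 0).trans (mem_closedBall.1 (hR hz))
  show z.x - _ ≤ R
  linarith [le_abs_self (z.x - z.s), z.s_le]

theorem coarseMap_straightLineHomotopy
    (hend : ∀ R, ∃ X, ∀ q : c01, (q : ℝ²) 0 - (p q + 1) ≤ R → (q : ℝ²) 0 ≤ X) :
    CoarseMap (straightLineHomotopy hp) :=
  ⟨bornologous_straightLineHomotopy hp, fun _ => isBounded_preimage_straightLineHomotopy hp hend⟩

end StraightLineHomotopy

theorem straight_line_coarse_homotopy_general (ρ : ℝ → ℝ) (hmono : Monotone ρ)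
    (hnonneg : ∀ x : ℝ, 0 ≤ x → 0 ≤ ρ x)
    (hsurj : ∀ y : ℝ, 0 ≤ y → ∃ x : ℝ, 0 ≤ x ∧ ρ x = y)
    (p : c01 → ℝ)
    (hpdef : ∀ q : c01, p q =
      (q : EuclideanSpace ℝ (Fin 2)) 0 - ρ ((q : EuclideanSpace ℝ (Fin 2)) 0) - 1) :
    ∃ H : Cyl p → c01, CoarseMap H ∧
      (∀ z : Cyl p,
        ((H z : EuclideanSpace ℝ (Fin 2)) 0 =
            ((z.val.ofLp.1 : EuclideanSpace ℝ (Fin 2)) 0) - z.val.ofLp.2) ∧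
        ((H z : EuclideanSpace ℝ (Fin 2)) 1 =
            (z.val.ofLp.1 : EuclideanSpace ℝ (Fin 2)) 1 *
              (((z.val.ofLp.1 : EuclideanSpace ℝ (Fin 2)) 0) - z.val.ofLp.2) /
              ((z.val.ofLp.1 : EuclideanSpace ℝ (Fin 2)) 0))) ∧
      (∀ z : Cyl p, z.val.ofLp.2 = 0 → H z = z.val.ofLp.1) ∧
      (∀ z : Cyl p,
        z.val.ofLp.2 = ((z.val.ofLp.1 : EuclideanSpace ℝ (Fin 2)) 0) -
            ρ ((z.val.ofLp.1 : EuclideanSpace ℝ (Fin 2)) 0) →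
          ((H z : EuclideanSpace ℝ (Fin 2)) 0 =
              ρ ((z.val.ofLp.1 : EuclideanSpace ℝ (Fin 2)) 0) ∧
            (H z : EuclideanSpace ℝ (Fin 2)) 1 =
              (z.val.ofLp.1 : EuclideanSpace ℝ (Fin 2)) 1 *
                ρ ((z.val.ofLp.1 : EuclideanSpace ℝ (Fin 2)) 0) /
                ((z.val.ofLp.1 : EuclideanSpace ℝ (Fin 2)) 0))) := by
  have hp : ∀ q : c01, p q + 1 ≤ (q : ℝ²) 0 := fun q => by
    linarith [hpdef q, hnonneg _ (q.2.1.trans q.2.2)]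
  have hunbdd : ¬BddAbove (range ρ) := fun ⟨M, hM⟩ => by
    obtain ⟨x, -, hx⟩ := hsurj (max M 0 + 1) (by positivity)
    linarith [hM ⟨x, hx⟩, le_max_left M 0]
  have hend : ∀ R, ∃ X, ∀ q : c01, (q : ℝ²) 0 - (p q + 1) ≤ R → (q : ℝ²) 0 ≤ X := fun R => by
    obtain ⟨X, hX⟩ := hmono.bddAbove_preimage_Iic hunbdd R
    exact ⟨X, fun q hq => hX (show ρ _ ≤ R by linarith [hpdef q])⟩
  refine ⟨straightLineHomotopy hp, coarseMap_straightLineHomotopy hp hend, fun z => ⟨rfl, rfl⟩,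
    fun z hz => straightLineHomotopy_of_s_eq_zero hp hz, fun z hz => ?_⟩
  change z.s = z.x - ρ z.x at hz
  change z.x - z.s = ρ z.x ∧ z.t * (z.x - z.s) / z.x = z.t * ρ z.x / z.x
  rw [hz, sub_sub_cancel]
  exact ⟨rfl, rfl⟩

/-- Given a monotone, surjective, `1`-Lipschitz reparametrization
`ρ : [0,∞) → [0,∞)` with `ρ(x) ≤ x` and `x ↦ x - ρ(x)` coarse, the straight-line map
`H((x,t),s) = (x-s, t(x-s)/x)`, defined on the cylinder `I_p c([0,1])` with
`p(x,t) = x - ρ(x) - 1`, is a coarse homotopy from the identity of `c([0,1])` to the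
map `g(x,t) = (ρ(x), t·ρ(x)/x)`. -/
theorem straight_line_coarse_homotopy (ρ : ℝ → ℝ) (hmono : Monotone ρ)
    (hnonneg : ∀ x : ℝ, 0 ≤ x → 0 ≤ ρ x)
    (hsurj : ∀ y : ℝ, 0 ≤ y → ∃ x : ℝ, 0 ≤ x ∧ ρ x = y)
    (hlip : ∀ a b : ℝ, 0 ≤ a → 0 ≤ b → |ρ a - ρ b| ≤ |a - b|)
    (hle : ∀ x : ℝ, 0 ≤ x → ρ x ≤ x)
    (hproper : ∀ B : Set ℝ, Bornology.IsBounded B →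
      Bornology.IsBounded {x : ℝ | 0 ≤ x ∧ x - ρ x ∈ B})
    (p : c01 → ℝ)
    (hpdef : ∀ q : c01, p q =
      (q : EuclideanSpace ℝ (Fin 2)) 0 - ρ ((q : EuclideanSpace ℝ (Fin 2)) 0) - 1) :
    ∃ H : Cyl p → c01, CoarseMap H ∧
      (∀ z : Cyl p,
        ((H z : EuclideanSpace ℝ (Fin 2)) 0 =
            ((z.val.ofLp.1 : EuclideanSpace ℝ (Fin 2)) 0) - z.val.ofLp.2) ∧
        ((H z : EuclideanSpace ℝ (Fin 2)) 1 =
            (z.val.ofLp.1 : EuclideanSpace ℝ (Fin 2)) 1 *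
              (((z.val.ofLp.1 : EuclideanSpace ℝ (Fin 2)) 0) - z.val.ofLp.2) /
              ((z.val.ofLp.1 : EuclideanSpace ℝ (Fin 2)) 0))) ∧
      (∀ z : Cyl p, z.val.ofLp.2 = 0 → H z = z.val.ofLp.1) ∧
      (∀ z : Cyl p,
        z.val.ofLp.2 = ((z.val.ofLp.1 : EuclideanSpace ℝ (Fin 2)) 0) -
            ρ ((z.val.ofLp.1 : EuclideanSpace ℝ (Fin 2)) 0) →
          ((H z : EuclideanSpace ℝ (Fin 2)) 0 =
              ρ ((z.val.ofLp.1 : EuclideanSpace ℝ (Fin 2)) 0) ∧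
            (H z : EuclideanSpace ℝ (Fin 2)) 1 =
              (z.val.ofLp.1 : EuclideanSpace ℝ (Fin 2)) 1 *
                ρ ((z.val.ofLp.1 : EuclideanSpace ℝ (Fin 2)) 0) /
                ((z.val.ofLp.1 : EuclideanSpace ℝ (Fin 2)) 0))) :=
  straight_line_coarse_homotopy_general ρ hmono hnonneg hsurj p hpdef
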